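/- Let α ≥ 0 and d ≥ 0. Then inf{ r̄(0, y₁, 0, y₂) : y₁ ∈ [0, d], y₂ ∈ [0, d] } = min( 1 , max( 1/2 , 1 − α , α − d ) , max( 1/2 , 1 − α/2 , (α − d)/2 ) ). (This is the symmetric DMT of the two-user interference channel in which the direct links are non-fading and only the two cross links fade; the right-hand side is the formula of the paper's theorem on fading interfering links.) -/

import Mathlib

/-!
Lower bound: each of the seven terms of `r̄(0,y₁,0,y₂)` dominates the right-hand side using only
the linear lower bounds `āᵢⱼ ≥ (each argument of its max)`; the two three-term averages are
compared with the first branch `max(1/2, 1-α, α-d)` when `α ≤ 2/3` and with the second one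
otherwise.

Upper bound: on the diagonal `y₁ = y₂ = y` one has `ā₁₂ = 1`,
`(ā₁₃+ā₂₃)/2 = max(1-α+y, α-y)⁺`, which at `y = α - 1/2` clipped to `[0,d]` is at most
`max(1/2, 1-α, α-d)`, and `(ā₁₁+ā₂₄)/2`, which at `y = α - 1` clipped to `[0,d]` is at most
`max(1/2, 1-α/2, (α-d)/2)`.
-/

/-- Per-state symmetric g.d.o.f. `r̄(x₁,y₁,x₂,y₂)` of the two-user interference
channel with direct fading exponents `x₁,x₂` and cross fading exponents `y₁,y₂`,
achievable when the transmitters know the channel gains. -/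
noncomputable def rbar (α x₁ y₁ x₂ y₂ : ℝ) : ℝ :=
  let a11 := max (1 - α - x₁ + y₂) 0
  let a12 := max (1 - x₁) 0
  let a13 := max (max (1 - α - x₁ + y₂) (α - y₁)) 0
  let a14 := max (max (1 - x₁) (α - y₁)) 0
  let a21 := max (1 - α - x₂ + y₁) 0
  let a22 := max (1 - x₂) 0
  let a23 := max (max (1 - α - x₂ + y₁) (α - y₂)) 0
  let a24 := max (max (1 - x₂) (α - y₂)) 0
  min a12 (min a22 (min ((a11 + a24)/2) (min ((a21 + a14)/2) (min ((a13 + a23)/2)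
    (min ((a11 + a14 + a23)/3) ((a21 + a24 + a13)/3))))))

noncomputable def crossFadingDMT (α d : ℝ) : ℝ :=
  min 1 (min (max (1/2) (max (1 - α) (α - d))) (max (1/2) (max (1 - α/2) ((α - d)/2))))

section crossFadingDMT

variable {α d t : ℝ}

lemma crossFadingDMT_le_of_ge_one (h : 1 ≤ t) : crossFadingDMT α d ≤ t :=
  (min_le_left _ _).trans h

lemma crossFadingDMT_le_of_ge_left (h₁ : 1/2 ≤ t) (h₂ : 1 - α ≤ t) (h₃ : α - d ≤ t) :
    crossFadingDMT α d ≤ t :=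
  (min_le_right _ _).trans <| (min_le_left _ _).trans <| max_le h₁ (max_le h₂ h₃)

lemma crossFadingDMT_le_of_ge_right (h₁ : 1/2 ≤ t) (h₂ : 1 - α/2 ≤ t) (h₃ : (α - d)/2 ≤ t) :
    crossFadingDMT α d ≤ t :=
  (min_le_right _ _).trans <| (min_le_right _ _).trans <| max_le h₁ (max_le h₂ h₃)

end crossFadingDMT

lemma rbar_nonneg (α x₁ y₁ x₂ y₂ : ℝ) : 0 ≤ rbar α x₁ y₁ x₂ y₂ := by
  unfold rbar
  positivity

lemma le_max_max {ι : Type*} [LinearOrder ι] (a b c : ι) :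
    a ≤ max (max a b) c ∧ b ≤ max (max a b) c :=
  ⟨(le_max_left a b).trans (le_max_left _ c), (le_max_right a b).trans (le_max_left _ c)⟩

lemma crossFadingDMT_le_rbar {α d y₁ y₂ : ℝ} (hα : 0 ≤ α)
    (hy₁ : y₁ ∈ Set.Icc 0 d) (hy₂ : y₂ ∈ Set.Icc 0 d) :
    crossFadingDMT α d ≤ rbar α 0 y₁ 0 y₂ := by
  obtain ⟨hy₁₀, hy₁d⟩ := hy₁
  obtain ⟨hy₂₀, hy₂d⟩ := hy₂
  have h11 := le_max_left (1 - α + y₂) 0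
  have h11₀ := le_max_right (1 - α + y₂) 0
  have h21 := le_max_left (1 - α + y₁) 0
  have h21₀ := le_max_right (1 - α + y₁) 0
  obtain ⟨h13, h13'⟩ := le_max_max (1 - α + y₂) (α - y₁) 0
  obtain ⟨h23, h23'⟩ := le_max_max (1 - α + y₁) (α - y₂) 0
  obtain ⟨h14, h14'⟩ := le_max_max 1 (α - y₁) 0
  obtain ⟨h24, h24'⟩ := le_max_max 1 (α - y₂) 0
  simp only [rbar, sub_zero, le_min_iff]
  refine ⟨crossFadingDMT_le_of_ge_one (le_max_left _ _),
    crossFadingDMT_le_of_ge_one (le_max_left _ _),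
    crossFadingDMT_le_of_ge_right (by linarith) (by linarith) (by linarith),
    crossFadingDMT_le_of_ge_right (by linarith) (by linarith) (by linarith),
    crossFadingDMT_le_of_ge_left (by linarith) (by linarith) (by linarith), ?_, ?_⟩ <;>
  rcases le_total α (2/3) with hα' | hα'
  all_goals first
    | exact crossFadingDMT_le_of_ge_left (by linarith) (by linarith) (by linarith)
    | exact crossFadingDMT_le_of_ge_right (by linarith) (by linarith) (by linarith)

lemma exists_nearest_mem_Icc {ι : Type*} [LinearOrder ι] {a b : ι} (hab : a ≤ b) (c : ι) :
    ∃ y ∈ Set.Icc a b, y = c ∨ (y = a ∧ c ≤ a) ∨ (y = b ∧ b ≤ c) := by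
  rcases le_total c a with hca | hac
  · exact ⟨a, ⟨le_rfl, hab⟩, Or.inr (Or.inl ⟨rfl, hca⟩)⟩
  rcases le_total b c with hbc | hcb
  · exact ⟨b, ⟨hab, le_rfl⟩, Or.inr (Or.inr ⟨rfl, hbc⟩)⟩
  · exact ⟨c, ⟨hac, hcb⟩, Or.inl rfl⟩

lemma max_add_max_le {ι : Type*} [AddCommMonoid ι] [LinearOrder ι] [IsOrderedAddMonoid ι]
    {a b c e t : ι} (h₁ : a + c ≤ t) (h₂ : a + e ≤ t) (h₃ : b + c ≤ t) (h₄ : b + e ≤ t) :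
    max a b + max c e ≤ t := by
  rw [max_add, add_max, add_max]
  exact max_le (max_le h₁ h₂) (max_le h₃ h₄)

lemma rbar_le_one_sub (α x₁ y₁ x₂ y₂ : ℝ) : rbar α x₁ y₁ x₂ y₂ ≤ max (1 - x₁) 0 :=
  min_le_left _ _

lemma rbar_diag_le_left (α y : ℝ) :
    rbar α 0 y 0 y ≤ max (max (1 - α + y) (α - y)) 0 := by
  have h : rbar α 0 y 0 y ≤
      (max (max (1 - α + y) (α - y)) 0 + max (max (1 - α + y) (α - y)) 0) / 2 := by
    simp only [rbar, sub_zero]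
    exact (min_le_right _ _).trans <| (min_le_right _ _).trans <| (min_le_right _ _).trans <|
      (min_le_right _ _).trans (min_le_left _ _)
  linarith

lemma rbar_diag_le_right (α y : ℝ) :
    rbar α 0 y 0 y ≤ (max (1 - α + y) 0 + max 1 (α - y)) / 2 := by
  simp only [rbar, sub_zero]
  rw [max_eq_left (le_max_of_le_left zero_le_one)]
  exact (min_le_right _ _).trans <| (min_le_right _ _).trans (min_le_left _ _)

lemma exists_rbar_diag_le_left {α d : ℝ} (hd : 0 ≤ d) :
    ∃ y ∈ Set.Icc 0 d, rbar α 0 y 0 y ≤ max (1/2) (max (1 - α) (α - d)) := by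
  obtain ⟨y, hy, hy'⟩ := exists_nearest_mem_Icc hd (α - 1/2)
  refine ⟨y, hy, (rbar_diag_le_left α y).trans ?_⟩
  have h₁ : 1/2 ≤ max (1/2) (max (1 - α) (α - d)) := le_max_left _ _
  have h₂ : 1 - α ≤ max (1/2) (max (1 - α) (α - d)) := (le_max_left _ _).trans (le_max_right _ _)
  have h₃ : α - d ≤ max (1/2) (max (1 - α) (α - d)) := (le_max_right _ _).trans (le_max_right _ _)
  obtain ⟨hy₀, hyd⟩ := hy
  rcases hy' with rfl | ⟨rfl, hc⟩ | ⟨rfl, hc⟩ <;>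
  exact max_le (max_le (by linarith) (by linarith)) (by linarith)

lemma exists_rbar_diag_le_right {α d : ℝ} (hd : 0 ≤ d) :
    ∃ y ∈ Set.Icc 0 d, rbar α 0 y 0 y ≤ max (1/2) (max (1 - α/2) ((α - d)/2)) := by
  obtain ⟨y, hy, hy'⟩ := exists_nearest_mem_Icc hd (α - 1)
  refine ⟨y, hy, (rbar_diag_le_right α y).trans ?_⟩
  have h₁ : 1/2 ≤ max (1/2) (max (1 - α/2) ((α - d)/2)) := le_max_left _ _
  have h₂ : 1 - α/2 ≤ max (1/2) (max (1 - α/2) ((α - d)/2)) :=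
    (le_max_left _ _).trans (le_max_right _ _)
  have h₃ : (α - d)/2 ≤ max (1/2) (max (1 - α/2) ((α - d)/2)) :=
    (le_max_right _ _).trans (le_max_right _ _)
  suffices max (1 - α + y) 0 + max 1 (α - y) ≤ 2 * max (1/2) (max (1 - α/2) ((α - d)/2)) by
    linarith
  obtain ⟨hy₀, hyd⟩ := hy
  rcases hy' with rfl | ⟨rfl, hc⟩ | ⟨rfl, hc⟩ <;>
  exact max_add_max_le (by linarith) (by linarith) (by linarith) (by linarith)

/-- Symmetric DMT of the interference channel with non-fading direct
links and fading cross links: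
`inf{ r̄(0,y₁,0,y₂) : y₁,y₂ ∈ [0,d] } = min(1, max(1/2, 1-α, α-d), max(1/2, 1-α/2, (α-d)/2))`. -/
theorem stmt_17 (α d : ℝ) (hα : 0 ≤ α) (hd : 0 ≤ d) :
    sInf {z : ℝ | ∃ y₁ y₂ : ℝ,
        0 ≤ y₁ ∧ y₁ ≤ d ∧ 0 ≤ y₂ ∧ y₂ ≤ d ∧
        z = rbar α 0 y₁ 0 y₂} =
      min 1
        (min (max (1/2) (max (1 - α) (α - d)))
          (max (1/2) (max (1 - α/2) ((α - d)/2)))) := by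
  set S := {z : ℝ | ∃ y₁ y₂ : ℝ, 0 ≤ y₁ ∧ y₁ ≤ d ∧ 0 ≤ y₂ ∧ y₂ ≤ d ∧ z = rbar α 0 y₁ 0 y₂}
  have hbdd : BddBelow S := ⟨0, by rintro _ ⟨y₁, y₂, -, -, -, -, rfl⟩; exact rbar_nonneg ..⟩
  have hdiag : ∀ y ∈ Set.Icc 0 d, rbar α 0 y 0 y ∈ S :=
    fun y ⟨hy₀, hyd⟩ => ⟨y, y, hy₀, hyd, hy₀, hyd, rfl⟩
  refine le_antisymm ?_ (le_csInf ⟨_, hdiag 0 ⟨le_rfl, hd⟩⟩ ?_)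
  · obtain ⟨y, hy, hy_le⟩ := exists_rbar_diag_le_left hd
    obtain ⟨y', hy', hy'_le⟩ := exists_rbar_diag_le_right hd
    refine le_min ?_ (le_min ?_ ?_)
    · exact csInf_le_of_le hbdd (hdiag 0 ⟨le_rfl, hd⟩) ((rbar_le_one_sub ..).trans (by norm_num))
    · exact csInf_le_of_le hbdd (hdiag y hy) hy_le
    · exact csInf_le_of_le hbdd (hdiag y' hy') hy'_le
  · rintro _ ⟨y₁, y₂, hy₁₀, hy₁d, hy₂₀, hy₂d, rfl⟩
    exact crossFadingDMT_le_rbar hα ⟨hy₁₀, hy₁d⟩ ⟨hy₂₀, hy₂d⟩
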